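/- arXiv:2505.21718 — 3 statements merged into one kernel-verified Lean document; each statement's English description precedes it below -/
import Mathlib

section
/- Let B and B' be Garside shadows in (W,S) with B ⊆ B', and let x, y ∈ W. If π_{B'}(x) = π_{B'}(y), then π_B(x) = π_B(y). -/
open CoxeterSystem

variable {ι W : Type} [Group W] {cm : CoxeterMatrix ι}

/-- The right weak order on `W`: `g ⪯ h` iff `ℓ(g) + ℓ(g⁻¹h) = ℓ(h)`. -/
def WLe (cs : CoxeterSystem cm W) (g h : W) : Prop :=
  cs.length g + cs.length (g⁻¹ * h) = cs.length h

/-- `w` is a suffix of `g` if `g = u * w` with `ℓ(g) = ℓ(u) + ℓ(w)`. -/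
def IsSuffixOf (cs : CoxeterSystem cm W) (w g : W) : Prop :=
  ∃ u : W, g = u * w ∧ cs.length g = cs.length u + cs.length w

/-- `j` is the join (least upper bound) of `X` with respect to the right weak order. -/
def IsJoin (cs : CoxeterSystem cm W) (X : Set W) (j : W) : Prop :=
  (∀ x ∈ X, WLe cs x j) ∧ ∀ u : W, (∀ x ∈ X, WLe cs x u) → WLe cs j u

/-- A Garside shadow: a subset of `W` containing all simple reflections, closed under
existing joins and under taking suffixes. -/
def IsGarsideShadow (cs : CoxeterSystem cm W) (B : Set W) : Prop :=
  (∀ i : ι, cs.simple i ∈ B) ∧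
  (∀ X : Set W, X ⊆ B → ∀ j : W, IsJoin cs X j → j ∈ B) ∧
  (∀ b ∈ B, ∀ w : W, IsSuffixOf cs w b → w ∈ B)

/-- `π` is the `B`-projection: `π g` is the join of `{b ∈ B : b ⪯ g}` and lies in `B`. -/
def IsGarsideProjection (cs : CoxeterSystem cm W) (B : Set W) (π : W → W) : Prop :=
  ∀ g : W, π g ∈ B ∧ IsJoin cs {b : W | b ∈ B ∧ WLe cs b g} (π g)

/-- The voracious projection with respect to `π = π_B`: `ν_B(g) = g · π_B(g⁻¹)`. -/
def vor (π : W → W) (g : W) : W := g * π g⁻¹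

/-- The language `L_g`, defined inductively: `L_id = {ε}` and
`L_g = {uv : u ∈ L_{ν_B(g)}, v a minimal length word representing ν_B(g)⁻¹g}`. -/
inductive VorL (cs : CoxeterSystem cm W) (π : W → W) : W → List ι → Prop
  | nil : VorL cs π 1 []
  | step {g : W} {u v : List ι} (hg : g ≠ 1) (hu : VorL cs π (vor π g) u)
      (hv : cs.wordProd v = (vor π g)⁻¹ * g)
      (hmin : v.length = cs.length ((vor π g)⁻¹ * g)) :
      VorL cs π g (u ++ v)

/-- The voracious language `V_B = ⋃_{g ∈ W} L_g`. -/
def VorLang (cs : CoxeterSystem cm W) (π : W → W) : Language ι :=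
  {v : List ι | ∃ g : W, VorL cs π g v}

/-- The reflection `r` separates `g` from `h`. -/
def SepElem (cs : CoxeterSystem cm W) (r g h : W) : Prop :=
  Xor' (cs.length (r * g) < cs.length g) (cs.length (r * h) < cs.length h)

/-- The reflection `r'` separates `g` from the wall of the reflection `r`. -/
def SepWall (cs : CoxeterSystem cm W) (r' g r : W) : Prop :=
  ∀ h : W, (∃ i : ι, r * h = h * cs.simple i) → SepElem cs r' g h

/-- The wall of the reflection `r` is `m`-close to `g`: at most `m` reflections
separate `g` from the wall of `r`. -/
def MClose (cs : CoxeterSystem cm W) (m : ℕ) (g r : W) : Prop :=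
  ∃ F : Finset W, F.card ≤ m ∧
    ∀ r' : W, cs.IsReflection r' → SepWall cs r' g r → r' ∈ F


theorem wle_trans (cs : CoxeterSystem cm W) {g h k : W}
    (h1 : WLe cs g h) (h2 : WLe cs h k) : WLe cs g k := by
  unfold WLe at *
  have t1 : cs.length (g⁻¹ * k) ≤ cs.length (g⁻¹ * h) + cs.length (h⁻¹ * k) := by
    have := cs.length_mul_le (g⁻¹ * h) (h⁻¹ * k)
    simpa [mul_assoc] using this
  have t2 : cs.length k ≤ cs.length g + cs.length (g⁻¹ * k) := by
    have := cs.length_mul_le g (g⁻¹ * k)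
    simpa using this
  omega

theorem wle_antisymm (cs : CoxeterSystem cm W) {g h : W}
    (h1 : WLe cs g h) (h2 : WLe cs h g) : g = h := by
  unfold WLe at *
  have hz : cs.length (g⁻¹ * h) = 0 := by omega
  exact inv_mul_eq_one.mp (cs.length_eq_zero_iff.mp hz)

theorem proj_wle (cs : CoxeterSystem cm W) {B : Set W} {π : W → W}
    (hpi : IsGarsideProjection cs B π) (g : W) : WLe cs (π g) g :=
  (hpi g).2.2 g (fun _ hb => hb.2)

theorem set_eq_proj (cs : CoxeterSystem cm W) {B B' : Set W} (hsub : B ⊆ B')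
    {π' : W → W} (hpi' : IsGarsideProjection cs B' π') (g : W) :
    {b : W | b ∈ B ∧ WLe cs b g} = {b : W | b ∈ B ∧ WLe cs b (π' g)} := by
  ext b
  constructor
  · rintro ⟨hbB, hble⟩
    exact ⟨hbB, (hpi' g).2.1 b ⟨hsub hbB, hble⟩⟩
  · rintro ⟨hbB, hble⟩
    exact ⟨hbB, wle_trans cs hble (proj_wle cs hpi' g)⟩

/-- If `B ⊆ B'` are Garside shadows and `π_{B'}(x) = π_{B'}(y)`,
then `π_B(x) = π_B(y)`. -/
theorem proj_refinement [Finite ι] (cs : CoxeterSystem cm W)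
    (B B' : Set W) (hB : IsGarsideShadow cs B) (hB' : IsGarsideShadow cs B')
    (hsub : B ⊆ B')
    (piB piB' : W → W) (hpi : IsGarsideProjection cs B piB)
    (hpi' : IsGarsideProjection cs B' piB')
    (x y : W) (h : piB' x = piB' y) : piB x = piB y := by
  have hx := (hpi x).2
  have hy := (hpi y).2
  rw [set_eq_proj cs hsub hpi' x, h, ← set_eq_proj cs hsub hpi' y] at hx
  exact wle_antisymm cs (hx.2 (piB y) hy.1) (hy.2 (piB x) hx.1)
end

section
/- Let B be a finite Garside shadow in (W,S). Then the voracious language V_B is a regular language over S. -/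
open CoxeterSystem

variable {ι W : Type} [Group W] {cm : CoxeterMatrix ι}

/-!
A word `w` lies in `V_B` iff it is reduced and cuts into nonempty blocks `v₁ ⋯ vₖ` such that each
block `vⱼ` represents `π_B(gⱼ⁻¹)⁻¹`, where `gⱼ` is the element represented by `v₁ ⋯ vⱼ`. Reading
`w` letter by letter, everything this requires can be tracked in `B × B`: the first component is
`π_B(g⁻¹)` for the prefix `g` read so far, and it evolves by `π_B(s g⁻¹) = π_B(s π_B(g⁻¹))`
whenever `g s` is reduced (this is where join- and suffix-closure of `B` enter); the second is
the inverse of the unfinished last block, which is a suffix of some `π_B(gⱼ⁻¹)` and so lies in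
`B`. A block may be closed exactly when the two components agree. When `B` is finite this is a
finite automaton.
-/

theorem NFA.isRegular_accepts {α σ : Type*} [Finite σ] (M : NFA α σ) : M.accepts.IsRegular :=
  Language.isRegular_iff.mpr ⟨Set σ, Fintype.ofFinite _, M.toDFA, M.toDFA_correct⟩

section WeakOrder

variable {cs : CoxeterSystem cm W}

theorem WLe.trans {a b c : W} (hab : WLe cs a b) (hbc : WLe cs b c) : WLe cs a c := by
  unfold WLe at *
  have hc := cs.length_mul_le a (a⁻¹ * c)
  have hac := cs.length_mul_le (a⁻¹ * b) (b⁻¹ * c)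
  rw [mul_inv_cancel_left] at hc
  rw [show a⁻¹ * b * (b⁻¹ * c) = a⁻¹ * c by group] at hac
  omega

theorem WLe.antisymm {a b : W} (hab : WLe cs a b) (hba : WLe cs b a) : a = b := by
  unfold WLe at *
  have h : a⁻¹ * b = 1 := cs.length_eq_zero_iff.mp (by omega)
  exact inv_mul_eq_one.mp h

theorem wLe_simple_iff {i : ι} {u : W} : WLe cs (cs.simple i) u ↔ cs.IsLeftDescent u i := by
  rw [WLe, cs.length_simple, cs.inv_simple, cs.isLeftDescent_iff]
  omega

theorem WLe.simple_mul {i : ι} {j u : W} (h : WLe cs j u) (hu : ¬cs.IsLeftDescent u i) :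
    WLe cs (cs.simple i * j) (cs.simple i * u) := by
  have hj : ¬cs.IsLeftDescent j i := fun hj =>
    hu (wLe_simple_iff.mp ((wLe_simple_iff.mpr hj).trans h))
  rw [cs.not_isLeftDescent_iff] at hu hj
  unfold WLe at h ⊢
  rw [show (cs.simple i * j)⁻¹ * (cs.simple i * u) = j⁻¹ * u by group, hj, hu]
  omega

theorem WLe.simple_mul_of_isLeftDescent {i : ι} {j u : W} (hj : cs.IsLeftDescent j i)
    (h : WLe cs j (cs.simple i * u)) (hu : ¬cs.IsLeftDescent u i) :
    WLe cs (cs.simple i * j) u := by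
  rw [cs.isLeftDescent_iff] at hj
  rw [cs.not_isLeftDescent_iff] at hu
  unfold WLe at h ⊢
  rw [show (cs.simple i * j)⁻¹ * u = j⁻¹ * (cs.simple i * u) by rw [mul_inv_rev, cs.inv_simple,
    mul_assoc]]
  omega

theorem isSuffixOf_simple_mul {i : ι} {j : W} (hj : cs.IsLeftDescent j i) :
    IsSuffixOf cs (cs.simple i * j) j := by
  refine ⟨cs.simple i, (cs.simple_mul_simple_cancel_left i).symm, ?_⟩
  rw [cs.length_simple, ← cs.isLeftDescent_iff.mp hj]
  omega

end WeakOrder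

section ReducedWords

variable {cs : CoxeterSystem cm W}

theorem wordProd_append_singleton_inv (p : List ι) (a : ι) :
    (cs.wordProd (p ++ [a]))⁻¹ = cs.simple a * (cs.wordProd p)⁻¹ := by
  rw [cs.wordProd_append, cs.wordProd_singleton, mul_inv_rev, cs.inv_simple]

theorem CoxeterSystem.IsReduced.of_append_left {t r : List ι} (h : cs.IsReduced (t ++ r)) :
    cs.IsReduced t := by
  simpa using h.take t.length

theorem CoxeterSystem.IsReduced.of_append_right {t r : List ι} (h : cs.IsReduced (t ++ r)) :
    cs.IsReduced r := by
  simpa using h.drop t.length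

theorem isReduced_append_singleton_iff {p : List ι} {a : ι} :
    cs.IsReduced (p ++ [a]) ↔ cs.IsReduced p ∧ ¬cs.IsLeftDescent (cs.wordProd p)⁻¹ a := by
  rw [cs.isLeftDescent_inv_iff, cs.not_isRightDescent_iff, CoxeterSystem.IsReduced,
    CoxeterSystem.IsReduced, cs.wordProd_append, cs.wordProd_singleton, List.length_append,
    List.length_singleton]
  have := cs.length_wordProd_le p
  rcases cs.length_mul_simple (cs.wordProd p) a with h | h <;> omega

theorem isSuffixOf_inv_wordProd_append {t r : List ι} (h : cs.IsReduced (t ++ r)) :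
    IsSuffixOf cs (cs.wordProd t)⁻¹ (cs.wordProd (t ++ r))⁻¹ := by
  refine ⟨(cs.wordProd r)⁻¹, by rw [cs.wordProd_append, mul_inv_rev], ?_⟩
  rw [cs.length_inv, cs.length_inv, cs.length_inv, h.eq, h.of_append_left.eq,
    h.of_append_right.eq, List.length_append, add_comm]

end ReducedWords

namespace IsGarsideProjection

variable {cs : CoxeterSystem cm W} {B : Set W} {π : W → W}

theorem mem (hπ : IsGarsideProjection cs B π) (g : W) : π g ∈ B := (hπ g).1

theorem wLe (hπ : IsGarsideProjection cs B π) (g : W) : WLe cs (π g) g :=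
  (hπ g).2.2 g fun _ hb => hb.2

theorem wLe_of_wLe (hπ : IsGarsideProjection cs B π) {b g : W} (hb : b ∈ B)
    (h : WLe cs b g) : WLe cs b (π g) :=
  (hπ g).2.1 b ⟨hb, h⟩

theorem apply_one (hπ : IsGarsideProjection cs B π) : π 1 = 1 := by
  have h := hπ.wLe 1
  unfold WLe at h
  rw [cs.length_one] at h
  exact cs.length_eq_zero_iff.mp (by omega)

theorem one_mem (hπ : IsGarsideProjection cs B π) : (1 : W) ∈ B :=
  hπ.apply_one ▸ hπ.mem 1

theorem isLeftDescent_iff (hS : ∀ i, cs.simple i ∈ B) (hπ : IsGarsideProjection cs B π)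
    {g : W} {i : ι} : cs.IsLeftDescent (π g) i ↔ cs.IsLeftDescent g i := by
  rw [← wLe_simple_iff, ← wLe_simple_iff]
  exact ⟨fun h => h.trans (hπ.wLe g), hπ.wLe_of_wLe (hS i)⟩

theorem wLe_apply_simple_mul (hB : IsGarsideShadow cs B) (hπ : IsGarsideProjection cs B π)
    {i : ι} {u v : W} (hu : ¬cs.IsLeftDescent u i) (hv : ¬cs.IsLeftDescent v i)
    (huv : ∀ b ∈ B, WLe cs b u → WLe cs b v) :
    WLe cs (π (cs.simple i * u)) (π (cs.simple i * v)) := by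
  set j := π (cs.simple i * u)
  have hsu : cs.IsLeftDescent (cs.simple i * u) i := by
    rwa [cs.isLeftDescent_iff_not_isLeftDescent_mul, cs.simple_mul_simple_cancel_left]
  have hj : cs.IsLeftDescent j i := (hπ.isLeftDescent_iff hB.1).mpr hsu
  have hsjB : cs.simple i * j ∈ B := hB.2.2 j (hπ.mem _) _ (isSuffixOf_simple_mul hj)
  have hsju : WLe cs (cs.simple i * j) u := (hπ.wLe _).simple_mul_of_isLeftDescent hj hu
  have hjv := (huv _ hsjB hsju).simple_mul hv
  rw [cs.simple_mul_simple_cancel_left] at hjv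
  exact hπ.wLe_of_wLe (hπ.mem _) hjv

theorem apply_simple_mul (hB : IsGarsideShadow cs B) (hπ : IsGarsideProjection cs B π)
    {i : ι} {w : W} (hw : ¬cs.IsLeftDescent w i) :
    π (cs.simple i * w) = π (cs.simple i * π w) := by
  have hπw : ¬cs.IsLeftDescent (π w) i := (hπ.isLeftDescent_iff hB.1).not.mpr hw
  exact (hπ.wLe_apply_simple_mul hB hw hπw fun _ => hπ.wLe_of_wLe).antisymm
    (hπ.wLe_apply_simple_mul hB hπw hw fun _ _ h => h.trans (hπ.wLe w))

end IsGarsideProjection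

section Voracious

variable {cs : CoxeterSystem cm W} {B : Set W} {π : W → W}

theorem vor_inv_mul (π : W → W) (g : W) : (vor π g)⁻¹ * g = (π g⁻¹)⁻¹ := by
  rw [vor, mul_inv_rev, inv_mul_cancel_right]

theorem length_vor_add (hπ : IsGarsideProjection cs B π) (g : W) :
    cs.length (vor π g) + cs.length ((vor π g)⁻¹ * g) = cs.length g := by
  have h := hπ.wLe g⁻¹
  unfold WLe at h
  rw [vor_inv_mul, cs.length_inv, show vor π g = ((π g⁻¹)⁻¹ * g⁻¹)⁻¹ by simp [vor],
    cs.length_inv, ← cs.length_inv g]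
  omega

theorem VorL.wordProd_eq {g : W} {w : List ι} (h : VorL cs π g w) : cs.wordProd w = g := by
  induction h with
  | nil => exact cs.wordProd_nil
  | step _ _ hv _ ih => rw [cs.wordProd_append, ih, hv, mul_inv_cancel_left]

theorem VorL.isReduced (hπ : IsGarsideProjection cs B π) {g : W} {w : List ι}
    (h : VorL cs π g w) : cs.IsReduced w := by
  induction h with
  | nil => exact cs.length_one
  | @step g u v hg hu hv hmin ih =>
    have := length_vor_add hπ g
    rw [CoxeterSystem.IsReduced, (VorL.step hg hu hv hmin).wordProd_eq, List.length_append, hmin,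
      ← ih.eq, hu.wordProd_eq]
    omega

theorem VorL.append_block {u v : List ι} (hu : VorL cs π (cs.wordProd u) u)
    (hred : cs.IsReduced (u ++ v)) (hv : v ≠ [])
    (hblock : (cs.wordProd v)⁻¹ = π (cs.wordProd (u ++ v))⁻¹) :
    VorL cs π (cs.wordProd (u ++ v)) (u ++ v) := by
  have hvor : vor π (cs.wordProd (u ++ v)) = cs.wordProd u := by
    rw [vor, ← hblock, cs.wordProd_append, mul_inv_cancel_right]
  have hv' : cs.wordProd v = (vor π (cs.wordProd (u ++ v)))⁻¹ * cs.wordProd (u ++ v) := by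
    rw [hvor, cs.wordProd_append, inv_mul_cancel_left]
  have hg : cs.wordProd (u ++ v) ≠ 1 := by
    intro h
    have := hred.eq
    rw [h, cs.length_one, List.length_append] at this
    exact hv (List.length_eq_zero_iff.mp (by omega))
  exact VorL.step hg (hvor ▸ hu) hv' (hv' ▸ hred.of_append_right.eq.symm)

theorem VorL.exists_append_block (hS : ∀ i, cs.simple i ∈ B) (hπ : IsGarsideProjection cs B π)
    {g : W} {w : List ι} (h : VorL cs π g w) (hw : w ≠ []) :
    ∃ u v, w = u ++ v ∧ v ≠ [] ∧ VorL cs π (cs.wordProd u) u ∧ (cs.wordProd v)⁻¹ = π g⁻¹ := by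
  cases h with
  | nil => exact absurd rfl hw
  | step hg hu hv _ =>
    refine ⟨_, _, rfl, ?_, by rwa [hu.wordProd_eq], by rw [hv, vor_inv_mul, inv_inv]⟩
    rintro rfl
    rw [cs.wordProd_nil, vor_inv_mul, eq_comm, inv_eq_one] at hv
    obtain ⟨i, hi⟩ := cs.exists_leftDescent_of_ne_one (inv_ne_one.mpr hg)
    exact cs.not_isLeftDescent_one i (hv ▸ (hπ.isLeftDescent_iff hS).mpr hi)

end Voracious

section Automaton

def VorStep (cs : CoxeterSystem cm W) (π : W → W) (x d : W) (a : ι) (x' d' : W) : Prop :=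
  ¬cs.IsLeftDescent x a ∧ x' = π (cs.simple a * x) ∧
    (d' = cs.simple a * d ∨ d' = 1 ∧ cs.simple a * d = x')

def vorNFA (cs : CoxeterSystem cm W) (B : Set W) (π : W → W) : NFA ι (B × B) where
  step q a := {q' | VorStep cs π q.1 q.2 a q'.1 q'.2}
  start := {q | (q.1 : W) = 1 ∧ (q.2 : W) = 1}
  accept := {q | (q.2 : W) = 1}

def VorState (cs : CoxeterSystem cm W) (π : W → W) (p : List ι) (x d : W) : Prop :=
  cs.IsReduced p ∧ x = π (cs.wordProd p)⁻¹ ∧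
    ∃ u t, p = u ++ t ∧ VorL cs π (cs.wordProd u) u ∧ cs.wordProd t = d⁻¹

variable {cs : CoxeterSystem cm W} {B : Set W} {π : W → W}

theorem vorState_nil_iff (hπ : IsGarsideProjection cs B π) {x d : W} :
    VorState cs π [] x d ↔ x = 1 ∧ d = 1 := by
  simp [VorState, CoxeterSystem.IsReduced, hπ.apply_one, eq_comm (a := (1 : W)), VorL.nil]

theorem VorState.append_singleton (hB : IsGarsideShadow cs B) (hπ : IsGarsideProjection cs B π)
    {p : List ι} {a : ι} {x d x' d' : W} (h : VorState cs π p x d)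
    (hstep : VorStep cs π x d a x' d') : VorState cs π (p ++ [a]) x' d' := by
  obtain ⟨hp, rfl, u, t, rfl, hu, ht⟩ := h
  obtain ⟨hdesc, rfl, hd'⟩ := hstep
  rw [(hπ.isLeftDescent_iff hB.1).not] at hdesc
  have hred : cs.IsReduced (u ++ t ++ [a]) := isReduced_append_singleton_iff.mpr ⟨hp, hdesc⟩
  have hx' : π (cs.simple a * π (cs.wordProd (u ++ t))⁻¹) = π (cs.wordProd (u ++ t ++ [a]))⁻¹ := by
    rw [← hπ.apply_simple_mul hB hdesc, wordProd_append_singleton_inv]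
  refine ⟨hred, hx', ?_⟩
  rcases hd' with rfl | ⟨rfl, hclose⟩
  · refine ⟨u, t ++ [a], List.append_assoc .., hu, ?_⟩
    rw [cs.wordProd_append, cs.wordProd_singleton, ht, mul_inv_rev, cs.inv_simple]
  · refine ⟨u ++ t ++ [a], [], (List.append_nil _).symm, ?_, by simp⟩
    rw [List.append_assoc] at hred ⊢
    refine hu.append_block hred (by simp) ?_
    rw [wordProd_append_singleton_inv, ht, inv_inv, ← List.append_assoc, hclose, hx']

theorem VorState.exists_of_append_singleton (hB : IsGarsideShadow cs B)
    (hπ : IsGarsideProjection cs B π) {p : List ι} {a : ι} {x' d' : W}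
    (h : VorState cs π (p ++ [a]) x' d') (hd' : d' ∈ B) :
    ∃ d ∈ B, VorState cs π p (π (cs.wordProd p)⁻¹) d ∧
      VorStep cs π (π (cs.wordProd p)⁻¹) d a x' d' := by
  obtain ⟨hred, rfl, u, t, hut, hu, ht⟩ := h
  obtain ⟨hp, hdesc⟩ := isReduced_append_singleton_iff.mp hred
  have hx' : π (cs.wordProd (p ++ [a]))⁻¹ = π (cs.simple a * π (cs.wordProd p)⁻¹) := by
    rw [wordProd_append_singleton_inv, hπ.apply_simple_mul hB hdesc]
  have hdesc' := (hπ.isLeftDescent_iff hB.1).not.mpr hdesc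
  rcases List.eq_nil_or_concat' t with rfl | ⟨t', b, rfl⟩
  · -- the letter `a` closes a block
    obtain rfl : p ++ [a] = u := by simpa using hut
    rw [cs.wordProd_nil, eq_comm, inv_eq_one] at ht
    obtain ⟨u₀, v, hsplit, hv, hu₀, hblock⟩ :=
      hu.exists_append_block hB.1 hπ (by simp)
    obtain ⟨v', c, rfl⟩ := (List.eq_nil_or_concat' v).resolve_left hv
    obtain ⟨rfl, rfl⟩ : p = u₀ ++ v' ∧ a = c :=
      List.append_singleton_inj.mp (hsplit.trans (List.append_assoc ..).symm)
    have hvred : cs.IsReduced (v' ++ [a]) := (List.append_assoc .. ▸ hred).of_append_right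
    refine ⟨(cs.wordProd v')⁻¹, ?_, ⟨hp, rfl, u₀, v', rfl, hu₀, (inv_inv _).symm⟩,
      hdesc', hx', Or.inr ⟨ht, ?_⟩⟩
    · exact hB.2.2 _ (hblock ▸ hπ.mem _) _ (isSuffixOf_inv_wordProd_append hvred)
    · rw [← wordProd_append_singleton_inv, hblock, hx']
  · -- the letter `a` extends an unfinished block
    obtain ⟨rfl, rfl⟩ : p = u ++ t' ∧ a = b :=
      List.append_singleton_inj.mp (hut.trans (List.append_assoc ..).symm)
    have htred : cs.IsReduced (t' ++ [a]) := (List.append_assoc .. ▸ hred).of_append_right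
    rw [← inv_eq_iff_eq_inv] at ht
    refine ⟨(cs.wordProd t')⁻¹, ?_, ⟨hp, rfl, u, t', rfl, hu, (inv_inv _).symm⟩,
      hdesc', hx', Or.inl ?_⟩
    · exact hB.2.2 _ (ht ▸ hd') _ (isSuffixOf_inv_wordProd_append htred)
    · rw [← ht, wordProd_append_singleton_inv]

theorem mem_vorNFA_eval_iff (hB : IsGarsideShadow cs B) (hπ : IsGarsideProjection cs B π)
    {p : List ι} {q : B × B} : q ∈ (vorNFA cs B π).eval p ↔ VorState cs π p q.1 q.2 := by
  induction p using List.reverseRecOn generalizing q with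
  | nil => rw [NFA.eval_nil, vorState_nil_iff hπ]; rfl
  | append_singleton p a ih =>
    rw [NFA.eval_append_singleton, NFA.mem_stepSet]
    constructor
    · rintro ⟨q₀, hq₀, hstep⟩
      exact (ih.mp hq₀).append_singleton hB hπ hstep
    · intro h
      obtain ⟨d, hd, hstate, hstep⟩ := h.exists_of_append_singleton hB hπ q.2.2
      exact ⟨(⟨_, hπ.mem _⟩, ⟨d, hd⟩), ih.mpr hstate, hstep⟩

theorem vorNFA_accepts (hB : IsGarsideShadow cs B) (hπ : IsGarsideProjection cs B π) :
    (vorNFA cs B π).accepts = VorLang cs π := by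
  ext w
  constructor
  · rintro ⟨q, hq1, hq⟩
    obtain ⟨hred, -, u, t, rfl, hu, ht⟩ := (mem_vorNFA_eval_iff hB hπ).mp hq
    have ht1 : cs.wordProd t = 1 := by rw [ht, show (q.2 : W) = 1 from hq1, inv_one]
    obtain rfl : t = [] := by
      simpa [CoxeterSystem.IsReduced, ht1, eq_comm] using hred.of_append_right
    exact ⟨_, by simpa using hu⟩
  · rintro ⟨g, h⟩
    refine ⟨(⟨_, hπ.mem (cs.wordProd w)⁻¹⟩, ⟨1, hπ.one_mem⟩), rfl,
      (mem_vorNFA_eval_iff hB hπ).mpr ⟨h.isReduced hπ, rfl, w, [], by simp, ?_, by simp⟩⟩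
    rwa [h.wordProd_eq]

end Automaton

theorem vorLang_regular_general (cs : CoxeterSystem cm W)
    (B : Set W) (hB : IsGarsideShadow cs B) (hBfin : B.Finite)
    (piB : W → W) (hpi : IsGarsideProjection cs B piB) :
    (VorLang cs piB).IsRegular := by
  have : Finite B := hBfin.to_subtype
  rw [← vorNFA_accepts hB hpi]
  exact (vorNFA cs B piB).isRegular_accepts

/-- If `B` is a finite Garside shadow, then the voracious language `V_B`
is a regular language over `S`. -/
theorem vorLang_regular [Finite ι] (cs : CoxeterSystem cm W)
    (B : Set W) (hB : IsGarsideShadow cs B) (hBfin : B.Finite)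
    (piB : W → W) (hpi : IsGarsideProjection cs B piB) :
    (VorLang cs piB).IsRegular :=
  vorLang_regular_general cs B hB hBfin piB hpi
end

section
/- Let B be a Garside shadow in (W,S), let g ∈ W and s ∈ S with ℓ(gs) < ℓ(g). Then ν_B(g) ⪯ gs ⪯ g. -/
open CoxeterSystem

variable {ι W : Type} [Group W] {cm : CoxeterMatrix ι}

/-
Since `ℓ(gs) < ℓ(g)`, the simple reflection `s` is a prefix of `g⁻¹`; as `s ∈ B`, it lies
below `p = π_B(g⁻¹) ⪯ g⁻¹`. On the interval below `g⁻¹`, the map `x ↦ g x` reverses the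
weak order (lengths add up along `x ⪯ y ⪯ g⁻¹`), so `s ⪯ p` gives `ν_B(g) = g p ⪯ g s`.
-/

section WeakOrder

variable {cs : CoxeterSystem cm W}

/-- Under `x ⪯ y ⪯ h`, `ℓ(x⁻¹h) = ℓ(x⁻¹y) + ℓ(y⁻¹h)`: the triangle inequality bounds it
above, and `ℓ(h) ≤ ℓ(x) + ℓ(x⁻¹h)` bounds it below. -/
theorem WLe.inv_mul_anti {x y h : W} (hxy : WLe cs x y) (hyh : WLe cs y h) :
    WLe cs (h⁻¹ * y) (h⁻¹ * x) := by
  unfold WLe at *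
  have hle : cs.length (x⁻¹ * h) ≤ cs.length (x⁻¹ * y) + cs.length (y⁻¹ * h) := by
    simpa [mul_assoc] using cs.length_mul_le (x⁻¹ * y) (y⁻¹ * h)
  have hge : cs.length h ≤ cs.length x + cs.length (x⁻¹ * h) := by
    simpa using cs.length_mul_le x (x⁻¹ * h)
  have hswap : cs.length (y⁻¹ * x) = cs.length (x⁻¹ * y) := by
    rw [← cs.length_inv, mul_inv_rev, inv_inv]
  have hcancel : (h⁻¹ * y)⁻¹ * (h⁻¹ * x) = y⁻¹ * x := by group
  rw [hcancel, ← cs.length_inv (h⁻¹ * y), ← cs.length_inv (h⁻¹ * x), mul_inv_rev, inv_inv,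
    mul_inv_rev, inv_inv]
  omega

theorem wle_simple_of_isLeftDescent {w : W} {i : ι} (h : cs.IsLeftDescent w i) :
    WLe cs (cs.simple i) w := by
  rw [WLe, cs.inv_simple, cs.length_simple]
  have := cs.isLeftDescent_iff.mp h
  omega

theorem wle_mul_simple_of_isRightDescent {w : W} {i : ι} (h : cs.IsRightDescent w i) :
    WLe cs (w * cs.simple i) w := by
  rw [WLe, mul_inv_rev, cs.inv_simple, inv_mul_cancel_right, cs.length_simple]
  exact cs.isRightDescent_iff.mp h

end WeakOrder

theorem IsGarsideProjection.wle_self {cs : CoxeterSystem cm W} {B : Set W} {π : W → W}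
    (hπ : IsGarsideProjection cs B π) (g : W) : WLe cs (π g) g :=
  (hπ g).2.2 g fun _ hb => hb.2

theorem IsGarsideProjection.wle_of_mem {cs : CoxeterSystem cm W} {B : Set W} {π : W → W}
    (hπ : IsGarsideProjection cs B π) {b g : W} (hb : b ∈ B) (hbg : WLe cs b g) :
    WLe cs b (π g) :=
  (hπ g).2.1 b ⟨hb, hbg⟩

theorem vor_le_of_descent_general (cs : CoxeterSystem cm W)
    (B : Set W) (hB : IsGarsideShadow cs B)
    (piB : W → W) (hpi : IsGarsideProjection cs B piB)
    (g : W) (s : ι) (hs : cs.length (g * cs.simple s) < cs.length g) :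
    WLe cs (vor piB g) (g * cs.simple s) ∧ WLe cs (g * cs.simple s) g := by
  have hs_le_inv : WLe cs (cs.simple s) g⁻¹ :=
    wle_simple_of_isLeftDescent (cs.isLeftDescent_inv_iff.mpr hs)
  have hs_le_proj : WLe cs (cs.simple s) (piB g⁻¹) := hpi.wle_of_mem (hB.1 s) hs_le_inv
  have hvor := hs_le_proj.inv_mul_anti (hpi.wle_self g⁻¹)
  rw [inv_inv] at hvor
  exact ⟨hvor, wle_mul_simple_of_isRightDescent hs⟩

/-- If `ℓ(gs) < ℓ(g)` for `s ∈ S`, then `ν_B(g) ⪯ gs ⪯ g`. -/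
theorem vor_le_of_descent [Finite ι] (cs : CoxeterSystem cm W)
    (B : Set W) (hB : IsGarsideShadow cs B)
    (piB : W → W) (hpi : IsGarsideProjection cs B piB)
    (g : W) (s : ι) (hs : cs.length (g * cs.simple s) < cs.length g) :
    WLe cs (vor piB g) (g * cs.simple s) ∧ WLe cs (g * cs.simple s) g :=
  vor_le_of_descent_general cs B hB piB hpi g s hs
end
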